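/- arXiv:math/0605738 — 2 statements merged into one kernel-verified Lean document; each statement's English description precedes it below -/
import Mathlib

section
/- The full generating function of anti-lecture hall compositions satisfies the recurrence Aₙ(x₁,...,xₙ) = A_{n−1}(x₁,...,x_{n−1})/(1−xₙ) − A_{n−1}(x₁,...,x_{n−2}, xₙx_{n−1})·(1/(1−xₙ) − 1/(1 − x₁x₂²···xₙⁿ)), with A₁(x₁) = 1/(1−x₁). -/
noncomputable section
open Classical

/-- The full generating function `A_k(x₁,…,x_k)` of anti-lecture hall
compositions of length `k`: nonnegative integer sequences with
`λᵢ/i ≥ λ_{i+1}/(i+1)` for `1 ≤ i < k`. -/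
def AGF (k : ℕ) : MvPowerSeries (Fin k) ℤ :=
  fun d => if ∀ i : Fin k, ∀ h : (i : ℕ) + 1 < k,
      ((i : ℕ) + 1) * d ⟨(i : ℕ) + 1, h⟩ ≤ ((i : ℕ) + 2) * d i
    then 1 else 0

/-- `A_{n−1}(x₁,…,x_{n−1})` viewed in the `n`-variable ring (`n = m+2`). -/
def AGFemb (m : ℕ) : MvPowerSeries (Fin (m + 2)) ℤ :=
  fun d => if (∀ i : Fin (m + 2), ∀ h : (i : ℕ) + 1 < m + 1,
      ((i : ℕ) + 1) * d ⟨(i : ℕ) + 1, by omega⟩ ≤ ((i : ℕ) + 2) * d i) ∧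
      d (Fin.last (m + 1)) = 0
    then 1 else 0

/-- `A_{n−1}(x₁,…,x_{n−2},xₙx_{n−1})`: the substitution `x_{n−1} ← x_{n−1}xₙ`
applied to `A_{n−1}`; the coefficient at `d` is nonzero exactly when the last
exponent equals the next-to-last exponent and the first `n−1` exponents form
an anti-lecture hall composition. -/
def AGFsub (m : ℕ) : MvPowerSeries (Fin (m + 2)) ℤ :=
  fun d => if (∀ i : Fin (m + 2), ∀ h : (i : ℕ) + 1 < m + 1,
      ((i : ℕ) + 1) * d ⟨(i : ℕ) + 1, by omega⟩ ≤ ((i : ℕ) + 2) * d i) ∧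
      d (Fin.last (m + 1)) = d ⟨m, by omega⟩
    then 1 else 0

/-- The monomial `x₁x₂²x₃³⋯xₙⁿ`. -/
def zMon (m : ℕ) : MvPowerSeries (Fin (m + 2)) ℤ :=
  ∏ k : Fin (m + 2), MvPowerSeries.X k ^ ((k : ℕ) + 1)

/-!
For a fixed admissible prefix ending in the part `b = λ_{n-1}`, the admissible last parts are
`0, …, ⌊n b / (n - 1)⌋`, so `Aₙ (1 - xₙ)` telescopes to `A_{n-1}` minus the series `O` of
sequences whose last part is the first inadmissible one. Multiplying by
`z = x₁x₂²⋯xₙⁿ` shifts a sequence by `(1, 2, …, n)`, which preserves the inequalities and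
lowers that bound by exactly `n`; hence in `O (1 - z) = S (xₙ - z)`, with
`S = A_{n-1}(x₁, …, x_{n-2}, xₙx_{n-1})`, the coefficients at exponents above `(1, 2, …, n)`
vanish on both sides. Since `λᵢ / i` decreases, the remaining exponents have `b < n - 1`, where
the first inadmissible last part is `b + 1`, as in `xₙ S`.
-/

open MvPowerSeries

theorem MvPowerSeries.prod_X_pow_eq_monomial {σ R : Type*} [Fintype σ] [CommSemiring R]
    (e : σ → ℕ) :
    ∏ k, (X k : MvPowerSeries σ R) ^ e k = monomial (Finsupp.equivFunOnFinite.symm e) 1 := by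
  simp only [X_pow_eq, prod_monomial, Finset.prod_const_one,
    Finsupp.equivFunOnFinite_symm_eq_sum]

theorem MvPowerSeries.coeff_mul_sub_monomial {σ R : Type*} [CommRing R]
    (f : MvPowerSeries σ R) (e e' d : σ →₀ ℕ) :
    coeff d (f * (monomial e 1 - monomial e' 1)) =
      (if e ≤ d then coeff (d - e) f else 0) - if e' ≤ d then coeff (d - e') f else 0 := by
  simp only [mul_sub, map_sub, coeff_mul_monomial, mul_one]

theorem MvPowerSeries.coeff_mul_one_sub_monomial {σ R : Type*} [CommRing R]
    (f : MvPowerSeries σ R) (e d : σ →₀ ℕ) :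
    coeff d (f * (1 - monomial e 1)) = coeff d f - if e ≤ d then coeff (d - e) f else 0 := by
  simpa using coeff_mul_sub_monomial f 0 e d

theorem Nat.mul_le_succ_mul_iff_le_add_div {k a b : ℕ} (hk : 0 < k) :
    k * a ≤ (k + 1) * b ↔ a ≤ b + b / k := by
  rw [show b + b / k = (b + b * k) / k by rw [Nat.add_mul_div_right _ _ hk, add_comm],
    Nat.le_div_iff_mul_le hk]
  constructor <;> intro h <;> linarith

theorem Nat.mul_tsub_le_mul_tsub_iff {p q x y : ℕ} (hx : q ≤ x) (hy : p ≤ y) :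
    p * (x - q) ≤ q * (y - p) ↔ p * x ≤ q * y := by
  have h₁ : p * q ≤ p * x := Nat.mul_le_mul_left p hx
  have h₂ : q * p ≤ q * y := Nat.mul_le_mul_left q hy
  rw [Nat.mul_sub, Nat.mul_sub]
  rw [mul_comm q p] at h₂ ⊢
  omega

namespace AntiLectureHall

variable {m : ℕ}

def zExp (m : ℕ) : Fin (m + 2) →₀ ℕ := Finsupp.equivFunOnFinite.symm fun i => (i : ℕ) + 1

@[simp]
theorem zExp_apply (i : Fin (m + 2)) : zExp m i = (i : ℕ) + 1 := rfl

theorem zMon_eq_monomial : zMon m = monomial (zExp m) 1 :=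
  prod_X_pow_eq_monomial _

def IsALHPrefix (m : ℕ) (d : Fin (m + 2) →₀ ℕ) : Prop :=
  ∀ i : Fin (m + 2), ∀ h : (i : ℕ) + 1 < m + 1,
    ((i : ℕ) + 1) * d ⟨(i : ℕ) + 1, by omega⟩ ≤ ((i : ℕ) + 2) * d i

/-- The largest admissible last part `⌊(m + 2) b / (m + 1)⌋` after a part `b`. -/
def maxLast (m b : ℕ) : ℕ := b + b / (m + 1)

theorem maxLast_of_lt {b : ℕ} (hb : b < m + 1) : maxLast m b = b := by
  simp [maxLast, Nat.div_eq_of_lt hb]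

theorem le_maxLast (b : ℕ) : b ≤ maxLast m b := Nat.le_add_right _ _

theorem maxLast_sub_add {b : ℕ} (hb : m + 1 ≤ b) :
    maxLast m (b - (m + 1)) + (m + 2) = maxLast m b := by
  obtain ⟨c, rfl⟩ := Nat.exists_eq_add_of_le' hb
  simp only [maxLast, Nat.add_sub_cancel, Nat.add_div_right _ (by omega : 0 < m + 1)]
  omega

/-- Sequences whose last part exceeds the admissible bound by exactly one. -/
def AGFoverflow (m : ℕ) : MvPowerSeries (Fin (m + 2)) ℤ :=
  fun d => if IsALHPrefix m d ∧
      d (Fin.last (m + 1)) = maxLast m (d ⟨m, by omega⟩) + 1 then 1 else 0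

theorem AGF_apply (d : Fin (m + 2) →₀ ℕ) :
    AGF (m + 2) d = if IsALHPrefix m d ∧
      d (Fin.last (m + 1)) ≤ maxLast m (d ⟨m, by omega⟩) then 1 else 0 := by
  refine if_congr ?_ rfl rfl
  rw [maxLast, ← Nat.mul_le_succ_mul_iff_le_add_div m.succ_pos]
  refine ⟨fun h => ⟨fun i hi => h i (by omega), h ⟨m, by omega⟩ (by simp)⟩, ?_⟩
  rintro ⟨hP, hlast⟩ ⟨i, hi⟩ h
  dsimp only at h ⊢
  rcases Nat.lt_or_ge (i + 1) (m + 1) with h' | h'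
  · exact hP ⟨i, hi⟩ h'
  · obtain rfl : i = m := by omega
    exact hlast

theorem AGFemb_apply (d : Fin (m + 2) →₀ ℕ) :
    AGFemb m d = if IsALHPrefix m d ∧ d (Fin.last (m + 1)) = 0 then 1 else 0 :=
  if_congr Iff.rfl rfl rfl

theorem AGFsub_apply (d : Fin (m + 2) →₀ ℕ) :
    AGFsub m d = if IsALHPrefix m d ∧
      d (Fin.last (m + 1)) = d ⟨m, by omega⟩ then 1 else 0 :=
  if_congr Iff.rfl rfl rfl

theorem isALHPrefix_congr {d d' : Fin (m + 2) →₀ ℕ}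
    (h : ∀ i : Fin (m + 2), (i : ℕ) ≤ m → d i = d' i) :
    IsALHPrefix m d ↔ IsALHPrefix m d' := by
  refine forall_congr' fun i => forall_congr' fun hi => ?_
  rw [h i (by omega), h _ (by simp only; omega)]

theorem sub_single_last_apply (d : Fin (m + 2) →₀ ℕ) (k : ℕ) {i : Fin (m + 2)}
    (hi : (i : ℕ) ≤ m) : (d - Finsupp.single (Fin.last (m + 1)) k) i = d i := by
  rw [Finsupp.tsub_apply, Finsupp.single_eq_of_ne (fun h => by simp [Fin.ext_iff] at h; omega),
    Nat.sub_zero]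

theorem isALHPrefix_sub_single_last (d : Fin (m + 2) →₀ ℕ) (k : ℕ) :
    IsALHPrefix m (d - Finsupp.single (Fin.last (m + 1)) k) ↔ IsALHPrefix m d :=
  isALHPrefix_congr fun _ => sub_single_last_apply d k

/-- The defining inequalities are homogeneous in `(i + 1, i + 2)`, so shifting by `zExp` keeps
them. -/
theorem isALHPrefix_sub_zExp {d : Fin (m + 2) →₀ ℕ} (hd : zExp m ≤ d) :
    IsALHPrefix m (d - zExp m) ↔ IsALHPrefix m d := by
  refine forall_congr' fun i => forall_congr' fun hi => ?_
  have h₀ := hd i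
  have h₁ := hd ⟨(i : ℕ) + 1, by omega⟩
  simp only [zExp_apply, Finsupp.tsub_apply] at h₀ h₁ ⊢
  exact Nat.mul_tsub_le_mul_tsub_iff h₁ h₀

/-- The ratios `λᵢ / i` decrease, so `λ_{m+1} ≥ m + 1` forces `λᵢ ≥ i` for all `i ≤ m + 1`. -/
theorem IsALHPrefix.succ_le_apply {d : Fin (m + 2) →₀ ℕ} (hP : IsALHPrefix m d)
    (hb : m + 1 ≤ d ⟨m, by omega⟩) {i : ℕ} (hi : i ≤ m) : i + 1 ≤ d ⟨i, by omega⟩ := by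
  induction hi using Nat.decreasingInduction with
  | self => exact hb
  | of_succ i hi ih =>
    have := hP ⟨i, by omega⟩ (by simp only; omega)
    simp only at this
    nlinarith

theorem IsALHPrefix.zExp_le {d : Fin (m + 2) →₀ ℕ} (hP : IsALHPrefix m d)
    (hb : m + 1 ≤ d ⟨m, by omega⟩) (ha : m + 2 ≤ d (Fin.last (m + 1))) : zExp m ≤ d := by
  intro i
  rcases Nat.lt_or_ge (i : ℕ) (m + 1) with h | h
  · exact hP.succ_le_apply hb (by omega)
  · obtain rfl : i = Fin.last (m + 1) := Fin.ext (by simp only [Fin.val_last]; omega)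
    exact ha

theorem AGF_mul_one_sub_X_last :
    AGF (m + 2) * (1 - X (Fin.last (m + 1))) = AGFemb m - AGFoverflow m := by
  ext d
  rw [X_def, coeff_mul_one_sub_monomial, map_sub]
  simp only [Finsupp.single_le_iff, coeff_apply, AGF_apply, AGFemb_apply, AGFoverflow,
    isALHPrefix_sub_single_last, sub_single_last_apply (i := ⟨m, by omega⟩) d 1 le_rfl, Finsupp.tsub_apply,
    Finsupp.single_eq_same]
  by_cases hP : IsALHPrefix m d
  · simp only [hP, true_and]
    split_ifs <;> omega
  · simp [hP]

theorem AGFoverflow_apply_sub_zExp {d : Fin (m + 2) →₀ ℕ} (hz : zExp m ≤ d) :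
    AGFoverflow m (d - zExp m) = AGFoverflow m d := by
  have ha := hz (Fin.last (m + 1))
  have hb := hz ⟨m, by omega⟩
  simp only [zExp_apply, Fin.val_last] at ha hb
  have := maxLast_sub_add hb
  have := le_maxLast (m := m) (d ⟨m, by omega⟩)
  refine if_congr (and_congr (isALHPrefix_sub_zExp hz) ?_) rfl rfl
  simp only [Finsupp.tsub_apply, zExp_apply, Fin.val_last]
  omega

theorem AGFsub_apply_sub_zExp {d : Fin (m + 2) →₀ ℕ} (hz : zExp m ≤ d) :
    AGFsub m (d - zExp m) = AGFsub m (d - Finsupp.single (Fin.last (m + 1)) 1) := by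
  have ha := hz (Fin.last (m + 1))
  have hb := hz ⟨m, by omega⟩
  simp only [zExp_apply, Fin.val_last] at ha hb
  refine if_congr (and_congr ((isALHPrefix_sub_zExp hz).trans
    (isALHPrefix_sub_single_last d 1).symm) ?_) rfl rfl
  simp only [Finsupp.tsub_apply, zExp_apply, Fin.val_last, Finsupp.single_eq_same,
    sub_single_last_apply (i := ⟨m, by omega⟩) d 1 le_rfl]
  omega

/-- Below the shift `zExp` the prefix ends in a part `b < m + 1` (by `IsALHPrefix.zExp_le`),
where the bound `maxLast m b` is just `b`. -/
theorem AGFoverflow_apply_of_not_zExp_le {d : Fin (m + 2) →₀ ℕ} (hz : ¬zExp m ≤ d) :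
    AGFoverflow m d = if Finsupp.single (Fin.last (m + 1)) 1 ≤ d then
      AGFsub m (d - Finsupp.single (Fin.last (m + 1)) 1) else 0 := by
  simp only [AGFoverflow, AGFsub_apply, Finsupp.single_le_iff, isALHPrefix_sub_single_last,
    sub_single_last_apply (i := ⟨m, by omega⟩) d 1 le_rfl, Finsupp.tsub_apply,
    Finsupp.single_eq_same]
  by_cases hP : IsALHPrefix m d
  swap
  · simp [hP]
  simp only [hP, true_and]
  rcases Nat.lt_or_ge (d ⟨m, by omega⟩) (m + 1) with hb | hb
  · rw [maxLast_of_lt hb]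
    split_ifs <;> omega
  · have := le_maxLast (m := m) (d ⟨m, by omega⟩)
    have ha : d (Fin.last (m + 1)) < m + 2 := by
      by_contra! ha
      exact hz (hP.zExp_le hb ha)
    split_ifs <;> omega

theorem AGFoverflow_mul_one_sub_zMon :
    AGFoverflow m * (1 - zMon m) = AGFsub m * (X (Fin.last (m + 1)) - zMon m) := by
  ext d
  rw [zMon_eq_monomial, X_def, coeff_mul_one_sub_monomial, coeff_mul_sub_monomial]
  simp only [coeff_apply]
  by_cases hz : zExp m ≤ d
  · have hlast : Finsupp.single (Fin.last (m + 1)) 1 ≤ d :=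
      Finsupp.single_le_iff.mpr (le_trans (by simp) (hz (Fin.last (m + 1))))
    rw [if_pos hz, if_pos hz, if_pos hlast, AGFoverflow_apply_sub_zExp hz,
      AGFsub_apply_sub_zExp hz, sub_self, sub_self]
  · rw [if_neg hz, if_neg hz, sub_zero, sub_zero, AGFoverflow_apply_of_not_zExp_le hz]

theorem one_sub_X_mul_AGF_one : (1 - X (0 : Fin 1)) * AGF 1 = 1 := by
  have hA (d : Fin 1 →₀ ℕ) : coeff d (AGF 1) = 1 := by
    rw [coeff_apply, AGF, if_pos]
    intro i h
    omega
  ext d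
  have hle : Finsupp.single 0 1 ≤ d ↔ d ≠ 0 := by
    simp [Finsupp.ext_iff, Fin.forall_fin_one, Nat.one_le_iff_ne_zero]
  rw [mul_comm, X_def, coeff_mul_one_sub_monomial, hA, hA, coeff_one]
  by_cases hd : d = 0 <;> simp [hd, hle]

end AntiLectureHall

/-- The recurrence
`Aₙ = A_{n−1}/(1−xₙ) − A_{n−1}(x₁,…,x_{n−2},xₙx_{n−1})·(1/(1−xₙ) − 1/(1−x₁x₂²⋯xₙⁿ))`
for `n = m+2`, with the denominators `(1−xₙ)(1−x₁x₂²⋯xₙⁿ)` cleared, together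
with the initial condition `A₁(x₁) = 1/(1−x₁)`. -/
theorem alhc_full_recurrence :
    ((1 - MvPowerSeries.X (0 : Fin 1)) * AGF 1 = 1) ∧
    ∀ m : ℕ,
      AGF (m + 2) * (1 - MvPowerSeries.X (Fin.last (m + 1))) * (1 - zMon m) =
        AGFemb m * (1 - zMon m) -
          AGFsub m * (MvPowerSeries.X (Fin.last (m + 1)) - zMon m) := by
  refine ⟨AntiLectureHall.one_sub_X_mul_AGF_one, fun m => ?_⟩
  rw [AntiLectureHall.AGF_mul_one_sub_X_last, sub_mul,
    AntiLectureHall.AGFoverflow_mul_one_sub_zMon]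
end
end

section
/- For every nonnegative integer n, Σ_{j=0}^{n} (−1)^j (−1;q)_j [n choose j]_q q^{C(n−j,2)} = (−1)^n q^{C(n,2)}, where C(m,2) = m(m−1)/2. -/
noncomputable section

def qPoch (a : RatFunc ℚ) (j : ℕ) : RatFunc ℚ :=
  ∏ t ∈ Finset.range j, (1 - a * RatFunc.X ^ t)

def gaussBinom (n j : ℕ) : RatFunc ℚ :=
  qPoch RatFunc.X n / (qPoch RatFunc.X j * qPoch RatFunc.X (n - j))

lemma aux_X_pow_ne_one (k : ℕ) (hk : k ≠ 0) : (RatFunc.X : RatFunc ℚ) ^ k ≠ 1 := by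
  intro h
  have hinj := IsFractionRing.injective (Polynomial ℚ) (RatFunc ℚ)
  have h2 : (Polynomial.X : Polynomial ℚ) ^ k = 1 := by
    apply hinj
    simpa [map_pow, RatFunc.algebraMap_X] using h
  have := congrArg Polynomial.natDegree h2
  simp [Polynomial.natDegree_X_pow] at this
  exact hk this

lemma aux_one_sub_X_pow_ne_zero (k : ℕ) (hk : k ≠ 0) :
    (1 : RatFunc ℚ) - RatFunc.X ^ k ≠ 0 := by
  intro h
  exact aux_X_pow_ne_one k hk (by linear_combination -h)

lemma aux_qPoch_succ (a : RatFunc ℚ) (j : ℕ) :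
    qPoch a (j + 1) = qPoch a j * (1 - a * RatFunc.X ^ j) :=
  Finset.prod_range_succ _ _

lemma aux_qPoch_zero (a : RatFunc ℚ) : qPoch a 0 = 1 := Finset.prod_range_zero _

lemma aux_qPochX_ne_zero (m : ℕ) : qPoch RatFunc.X m ≠ 0 := by
  unfold qPoch
  rw [Finset.prod_ne_zero_iff]
  intro t _
  have h : (1 : RatFunc ℚ) - RatFunc.X * RatFunc.X ^ t = 1 - RatFunc.X ^ (t + 1) := by ring
  rw [h]
  exact aux_one_sub_X_pow_ne_zero _ (Nat.succ_ne_zero t)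

lemma aux_gaussBinom_zero (n : ℕ) : gaussBinom n 0 = 1 := by
  unfold gaussBinom
  rw [Nat.sub_zero, aux_qPoch_zero, one_mul, div_self (aux_qPochX_ne_zero n)]

lemma aux_gaussBinom_self (n : ℕ) : gaussBinom n n = 1 := by
  unfold gaussBinom
  rw [Nat.sub_self, aux_qPoch_zero, mul_one, div_self (aux_qPochX_ne_zero n)]

lemma aux_gaussBinom_pascal (k d : ℕ) :
    gaussBinom (k + d + 2) (k + 1)
      = gaussBinom (k + d + 1) (k + 1) + RatFunc.X ^ (d + 1) * gaussBinom (k + d + 1) k := by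
  have e1 : k + d + 2 - (k + 1) = d + 1 := by omega
  have e2 : k + d + 1 - (k + 1) = d := by omega
  have e3 : k + d + 1 - k = d + 1 := by omega
  unfold gaussBinom
  rw [e1, e2, e3]
  have hq1 : qPoch RatFunc.X (k + d + 2)
      = qPoch RatFunc.X (k + d + 1) * (1 - RatFunc.X ^ (k + d + 2)) := by
    rw [show k + d + 2 = (k + d + 1) + 1 from rfl, aux_qPoch_succ]; ring
  have hq2 : qPoch RatFunc.X (k + 1) = qPoch RatFunc.X k * (1 - RatFunc.X ^ (k + 1)) := by
    rw [aux_qPoch_succ]; ring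
  have hq3 : qPoch RatFunc.X (d + 1) = qPoch RatFunc.X d * (1 - RatFunc.X ^ (d + 1)) := by
    rw [aux_qPoch_succ]; ring
  rw [hq1, hq2, hq3]
  have hA := aux_qPochX_ne_zero (k + d + 1)
  have hB := aux_qPochX_ne_zero k
  have hC := aux_qPochX_ne_zero d
  have hu := aux_one_sub_X_pow_ne_zero (k + 1) (by omega)
  have hv := aux_one_sub_X_pow_ne_zero (d + 1) (by omega)
  field_simp
  ring

lemma aux_tri (d : ℕ) : (d + 1) * (d + 1 - 1) / 2 = d * (d - 1) / 2 + d := by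
  rw [← Nat.choose_two_right, ← Nat.choose_two_right]
  simp [Nat.choose_succ_succ]; omega

lemma aux_key (n : ℕ) : ∀ j ∈ Finset.range n,
    (-1 : RatFunc ℚ) ^ (j + 1) * qPoch (-1) (j + 1) * gaussBinom (n + 1) (j + 1) *
        RatFunc.X ^ ((n + 1 - (j + 1)) * (n + 1 - (j + 1) - 1) / 2)
    = ((-1 : RatFunc ℚ) ^ (j + 1) * qPoch (-1) (j + 1) * gaussBinom n (j + 1) *
          RatFunc.X ^ ((n - (j + 1)) * (n - (j + 1) - 1) / 2 + (n - (j + 1)))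
        - (-1 : RatFunc ℚ) ^ j * qPoch (-1) j * gaussBinom n j *
          RatFunc.X ^ ((n - j) * (n - j - 1) / 2 + (n - j)))
      - RatFunc.X ^ n *
        ((-1 : RatFunc ℚ) ^ j * qPoch (-1) j * gaussBinom n j *
          RatFunc.X ^ ((n - j) * (n - j - 1) / 2)) := by
  intro j hj
  have hjn : j < n := Finset.mem_range.1 hj
  obtain ⟨d, rfl⟩ : ∃ d, n = j + d + 1 := ⟨n - j - 1, by omega⟩
  have e1 : j + d + 1 + 1 - (j + 1) = d + 1 := by omega
  have e2 : j + d + 1 - (j + 1) = d := by omega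
  have e3 : j + d + 1 - j = d + 1 := by omega
  rw [e1, e2, e3, show j + d + 1 + 1 = j + d + 2 from rfl, aux_gaussBinom_pascal,
    aux_qPoch_succ, aux_tri d]
  ring

/-- `Σ_{j=0}^{n} (−1)^j (−1;q)_j [n choose j]_q q^{C(n−j,2)} = (−1)^n q^{C(n,2)}`. -/
theorem alternating_qbinom_sum_weighted (n : ℕ) :
    ∑ j ∈ Finset.range (n + 1),
      (-1 : RatFunc ℚ) ^ j * qPoch (-1) j * gaussBinom n j *
        RatFunc.X ^ ((n - j) * (n - j - 1) / 2) =
    (-1) ^ n * RatFunc.X ^ (n * (n - 1) / 2) := by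
  induction n with
  | zero => simp [aux_qPoch_zero, aux_gaussBinom_zero]
  | succ n ih =>
    rw [Finset.sum_range_succ, Finset.sum_range_succ', Finset.sum_congr rfl (aux_key n),
      Finset.sum_sub_distrib, Finset.sum_sub_distrib, ← Finset.mul_sum]
    have hW1 : (∑ j ∈ Finset.range n,
        (-1 : RatFunc ℚ) ^ (j + 1) * qPoch (-1) (j + 1) * gaussBinom n (j + 1) *
          RatFunc.X ^ ((n - (j + 1)) * (n - (j + 1) - 1) / 2 + (n - (j + 1))))
        = (∑ j ∈ Finset.range (n + 1),
            (-1 : RatFunc ℚ) ^ j * qPoch (-1) j * gaussBinom n j *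
              RatFunc.X ^ ((n - j) * (n - j - 1) / 2 + (n - j)))
          - (-1 : RatFunc ℚ) ^ 0 * qPoch (-1) 0 * gaussBinom n 0 *
              RatFunc.X ^ ((n - 0) * (n - 0 - 1) / 2 + (n - 0)) := by
      rw [Finset.sum_range_succ']; ring
    have hW2 : (∑ j ∈ Finset.range n,
        (-1 : RatFunc ℚ) ^ j * qPoch (-1) j * gaussBinom n j *
          RatFunc.X ^ ((n - j) * (n - j - 1) / 2 + (n - j)))
        = (∑ j ∈ Finset.range (n + 1),
            (-1 : RatFunc ℚ) ^ j * qPoch (-1) j * gaussBinom n j *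
              RatFunc.X ^ ((n - j) * (n - j - 1) / 2 + (n - j)))
          - (-1 : RatFunc ℚ) ^ n * qPoch (-1) n * gaussBinom n n *
              RatFunc.X ^ ((n - n) * (n - n - 1) / 2 + (n - n)) := by
      rw [Finset.sum_range_succ]; ring
    have hf : (∑ j ∈ Finset.range n,
        (-1 : RatFunc ℚ) ^ j * qPoch (-1) j * gaussBinom n j *
          RatFunc.X ^ ((n - j) * (n - j - 1) / 2))
        = (-1 : RatFunc ℚ) ^ n * RatFunc.X ^ (n * (n - 1) / 2)
          - (-1 : RatFunc ℚ) ^ n * qPoch (-1) n * gaussBinom n n *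
              RatFunc.X ^ ((n - n) * (n - n - 1) / 2) := by
      rw [← ih, Finset.sum_range_succ]; ring
    rw [hW1, hW2, hf]
    have htri : (n + 1) * n / 2 = n * (n - 1) / 2 + n := by
      have h := aux_tri n; simpa using h
    rw [aux_gaussBinom_zero, aux_gaussBinom_self, aux_gaussBinom_zero, aux_gaussBinom_self,
      aux_qPoch_zero, aux_qPoch_succ]
    simp only [Nat.sub_zero, Nat.sub_self, Nat.add_sub_cancel, pow_zero, Nat.zero_mul,
      Nat.zero_div, Nat.add_zero, htri]
    ring
end
end
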